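/- arXiv:2002.01773 — 8 statements merged into one kernel-verified Lean document; each statement's English description precedes it below -/
import Mathlib

section
/- In a finite group G, if the proportion of elements x with x^2 = 1 is strictly greater than 3/4, then every element of G satisfies x^2 = 1 (and in particular G is Abelian). -/
/-!
If `a² = 1`, then `x` and `a x` are both involutions for at least `2|S| - |G| > |G|/2` elements `x`,
where `S = {x | x² = 1}`, and each such `x` commutes with `a`. So the centralizer of `a` is all of
`G`, i.e. `S` lies in the centre, which is therefore everything. In the now abelian group `S` is
the kernel of `x ↦ x²`, a subgroup of more than half of `G`, hence `S = G`.
-/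

theorem Subgroup.eq_top_of_card_lt_two_mul {G : Type*} [Group G] [Finite G] (H : Subgroup G)
    (h : Nat.card G < 2 * Nat.card H) : H = ⊤ := by
  by_contra hH
  have h2 : 2 ≤ H.index := H.one_lt_index_of_ne_top hH
  have : Nat.card H * 2 ≤ Nat.card G := H.card_mul_index ▸ Nat.mul_le_mul_left _ h2
  omega

theorem Commute.of_sq_eq_one {G : Type*} [Group G] {a x : G} (ha : a ^ 2 = 1) (hx : x ^ 2 = 1)
    (hax : (a * x) ^ 2 = 1) : Commute a x := by
  have inv_self {y : G} (hy : y ^ 2 = 1) : y⁻¹ = y := inv_eq_of_mul_eq_one_right (pow_two y ▸ hy)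
  calc a * x = (a * x)⁻¹ := (inv_self hax).symm
    _ = x * a := by rw [mul_inv_rev, inv_self hx, inv_self ha]

theorem Set.ncard_add_ncard_le_ncard_inter_add_card {α : Type*} [Finite α] (s t : Set α) :
    s.ncard + t.ncard ≤ (s ∩ t).ncard + Nat.card α := by
  rw [← Set.ncard_inter_add_ncard_union s t]
  exact Nat.add_le_add_left (Set.ncard_le_card _) _

theorem two_mul_card_sq_eq_one_le_card_centralizer_add_card {G : Type*} [Group G] [Finite G]
    {a : G} (ha : a ^ 2 = 1) :
    2 * Nat.card {x : G // x ^ 2 = 1} ≤ Nat.card (Subgroup.centralizer {a}) + Nat.card G := by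
  set S : Set G := {x | x ^ 2 = 1}
  have htranslate : ((a * ·) ⁻¹' S).ncard = S.ncard :=
    Set.ncard_preimage_of_injective_subset_range (mul_right_injective a)
      (fun y _ => ⟨a⁻¹ * y, mul_inv_cancel_left a y⟩)
  have hsub : S ∩ (a * ·) ⁻¹' S ⊆ Subgroup.centralizer {a} := fun x ⟨hx, hax⟩ =>
    Subgroup.mem_centralizer_singleton_iff.mpr (Commute.of_sq_eq_one ha hx hax).symm
  have hcount := Set.ncard_add_ncard_le_ncard_inter_add_card S ((a * ·) ⁻¹' S)
  have hle : (S ∩ (a * ·) ⁻¹' S).ncard ≤ (Subgroup.centralizer {a} : Set G).ncard :=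
    Set.ncard_le_ncard hsub
  change 2 * S.ncard ≤ (Subgroup.centralizer {a} : Set G).ncard + Nat.card G
  omega

theorem stmt_0 {G : Type*} [Group G] [Finite G]
    (h : 3 * Nat.card G < 4 * Nat.card {x : G // x ^ 2 = 1}) :
    (∀ x : G, x ^ 2 = 1) ∧ (∀ x y : G, x * y = y * x) := by
  have hcentral (a : G) (ha : a ^ 2 = 1) : a ∈ Subgroup.center G := by
    have := two_mul_card_sq_eq_one_le_card_centralizer_add_card ha
    have htop := (Subgroup.centralizer {a}).eq_top_of_card_lt_two_mul (by omega)
    exact Subgroup.mem_center_iff.mpr fun g =>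
      Subgroup.mem_centralizer_singleton_iff.mp (htop ▸ Subgroup.mem_top g)
  have hcomm (x y : G) : x * y = y * x := by
    have hle : Nat.card {x : G // x ^ 2 = 1} ≤ Nat.card (Subgroup.center G) :=
      Set.ncard_le_ncard (t := (Subgroup.center G : Set G)) hcentral
    have htop := (Subgroup.center G).eq_top_of_card_lt_two_mul (by omega)
    exact (Subgroup.mem_center_iff.mp (htop ▸ Subgroup.mem_top x) y).symm
  let sq : G →* G := MonoidHom.mk' (· ^ 2) fun x y => (Commute.mul_pow (hcomm x y) 2)
  have hker : sq.ker = ⊤ := sq.ker.eq_top_of_card_lt_two_mul <| by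
    change _ < 2 * Nat.card {x : G // x ^ 2 = 1}
    omega
  exact ⟨fun x => sq.mem_ker.mp (hker ▸ Subgroup.mem_top x), hcomm⟩
end

section
/- The equation x^2 = 1 has finite satisfiability gap 1/4: for every finite group G, either every element of G squares to the identity, or the proportion of x ∈ G with x^2 = 1 is at most 3/4. -/
/-!
Let `S` be the set of solutions of `x ^ 2 = 1` and suppose `|S| > 3|G|/4`. For `a ∈ S`, the sets
`S` and `a S` meet in more than `|G|/2` elements, and each of them, being `a s` with `a`, `s` and
`a s` all involutions, commutes with `a`. So the centralizer of `a` is a subgroup of index `< 2`,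
i.e. every element of `S` is central. Central solutions of `x ^ 2 = 1` form a subgroup, which has
more than half the elements of `G` and is therefore `G` itself.
-/

open Pointwise

theorem Commute.of_sq_eq_one_s2 {M : Type*} [Monoid M] {a b : M}
    (ha : a ^ 2 = 1) (hb : b ^ 2 = 1) (hab : (a * b) ^ 2 = 1) : Commute a b := by
  rw [sq] at ha hb hab
  calc a * b = a * (a * b * (a * b)) * b := by rw [hab, mul_one]
    _ = (a * a) * (b * a) * (b * b) := by simp only [mul_assoc]
    _ = b * a := by rw [ha, hb, one_mul, mul_one]

namespace Subgroup

variable {G : Type*} [Group G]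

theorem eq_top_of_card_lt_two_mul_s2 {H : Subgroup G} [Finite (G ⧸ H)]
    (h : Nat.card G < 2 * Nat.card H) : H = ⊤ := by
  by_contra hH
  have h2 : 2 ≤ H.index := one_lt_index_of_ne_top hH
  have := H.card_mul_index
  nlinarith

def ofCentralPowEqOne (n : ℕ) (h : {x : G | x ^ n = 1} ⊆ center G) : Subgroup G where
  carrier := {x | x ^ n = 1}
  one_mem' := one_pow n
  mul_mem' {x y} hx hy := by
    simp only [Set.mem_ofPred_eq] at hx hy ⊢
    rw [Commute.mul_pow (mem_center_iff.mp (h hx) y).symm, hx, hy, one_mul]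
  inv_mem' {x} hx := by
    simp only [Set.mem_ofPred_eq] at hx ⊢
    rw [inv_pow, hx, inv_one]

end Subgroup

theorem inter_smul_subset_centralizer {G : Type*} [Group G] {a : G} (ha : a ^ 2 = 1) :
    {x : G | x ^ 2 = 1} ∩ a • {x : G | x ^ 2 = 1} ⊆ Subgroup.centralizer {a} := by
  rintro _ ⟨hx, s, hs, rfl⟩
  rw [SetLike.mem_coe, Subgroup.mem_centralizer_singleton_iff]
  exact ((Commute.refl a).mul_right (Commute.of_sq_eq_one_s2 ha hs hx)).symm.eq

section Involutions

variable {G : Type*} [Group G] [Finite G]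

theorem two_mul_ncard_le_ncard_inter_smul_add_card (s : Set G) (a : G) :
    2 * s.ncard ≤ (s ∩ a • s).ncard + Nat.card G := by
  have := Set.ncard_inter_add_ncard_union s (a • s)
  have := Set.ncard_le_card (s ∪ a • s)
  rw [Set.ncard_smul_set] at *
  omega

theorem mem_center_of_sq_eq_one
    (h : 3 * Nat.card G < 4 * Nat.card {x : G // x ^ 2 = 1}) {a : G} (ha : a ^ 2 = 1) :
    a ∈ Subgroup.center G := by
  have hC : Subgroup.centralizer {a} = ⊤ := by
    apply Subgroup.eq_top_of_card_lt_two_mul_s2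
    have hcount := two_mul_ncard_le_ncard_inter_smul_add_card {x : G | x ^ 2 = 1} a
    have hsub := Set.ncard_le_ncard (inter_smul_subset_centralizer ha)
    have hS : Nat.card {x : G // x ^ 2 = 1} = {x : G | x ^ 2 = 1}.ncard :=
      Nat.card_coe_set_eq _
    have hcard := Nat.card_coe_set_eq (Subgroup.centralizer {a} : Set G)
    rw [SetLike.coe_sort_coe] at hcard
    omega
  exact Subgroup.centralizer_eq_top_iff_subset.mp hC rfl

end Involutions

theorem stmt_2 {G : Type*} [Group G] [Finite G] :
    (∀ x : G, x ^ 2 = 1) ∨ 4 * Nat.card {x : G // x ^ 2 = 1} ≤ 3 * Nat.card G := by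
  refine (le_or_gt _ _).elim Or.inr fun hbig => Or.inl ?_
  have hcentral : {x : G | x ^ 2 = 1} ⊆ Subgroup.center G :=
    fun _ ha => mem_center_of_sq_eq_one hbig ha
  have hcard : Nat.card (Subgroup.ofCentralPowEqOne 2 hcentral) =
      Nat.card {x : G // x ^ 2 = 1} := rfl
  have htop := Subgroup.eq_top_of_card_lt_two_mul_s2 (H := Subgroup.ofCentralPowEqOne 2 hcentral)
    (by omega)
  exact (Subgroup.eq_top_iff' _).mp htop
end

section
/- Let G be a finite group, n a natural number, and f : G^n → G a function. Let ε > 0 be such that for every finite group Q and every homomorphically-induced version of the equation f = 1, the degree of satisfiability in Q is either 1 or at most 1 − ε. Then for any normal subgroup N of G, either the image of f is contained in N, or the proportion of tuples (x_1,...,x_n) ∈ G^n with f(x_1,...,x_n) ∈ N is at most 1 − ε. (Concretely, for f given by a word w in n variables: if the proportion of tuples with w(x̄) ∈ N exceeds 1 − ε, then w(ȳ) ∈ N for all tuples ȳ ∈ G^n.) -/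
/-!
Membership of `w(x̄)` in `N` is the equation `w = 1` in `G ⧸ N` evaluated at the image of `x̄`.
The map `Gⁿ → (G ⧸ N)ⁿ` is a surjective homomorphism, so all its fibres are cosets of its
kernel and it preserves the proportion of tuples satisfying any condition. The gap for the
equation in the finite group `G ⧸ N` therefore becomes the gap for `w(x̄) ∈ N` in `G`.
-/

namespace MonoidHom

variable {A B : Type*} [Group A] [Group B] {Φ : A →* B}

theorem card_preimage_eq_card_mul_card_ker (hΦ : Function.Surjective Φ) (S : Set B) :
    Nat.card (Φ ⁻¹' S) = Nat.card S * Nat.card Φ.ker := by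
  rw [← Nat.card_prod]
  exact Nat.card_congr <| (Equiv.sigmaSubtypeFiberEquivSubtype Φ fun _ => Iff.rfl).symm.trans <|
    (Equiv.sigmaCongrRight fun s : S => fiberEquivKerOfSurjective hΦ s).trans
      (Equiv.sigmaEquivProd _ _)

theorem card_subtype_comp_le_mul_card (hΦ : Function.Surjective Φ) {p : B → Prop} {c : ℚ}
    (h : (Nat.card {b // p b} : ℚ) ≤ c * Nat.card B) :
    (Nat.card {a // p (Φ a)} : ℚ) ≤ c * Nat.card A := by
  have hA : Nat.card A = Nat.card B * Nat.card Φ.ker := by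
    rw [← Nat.card_univ, ← Set.preimage_univ (f := Φ), card_preimage_eq_card_mul_card_ker hΦ,
      Nat.card_univ]
  have hp : Nat.card {a // p (Φ a)} = Nat.card {b // p b} * Nat.card Φ.ker :=
    card_preimage_eq_card_mul_card_ker hΦ {b | p b}
  rw [hp, hA]
  push_cast
  rw [← mul_assoc]
  exact mul_le_mul_of_nonneg_right h (Nat.cast_nonneg _)

end MonoidHom

theorem stmt_4_general {n : ℕ} (w : ∀ (H : Type) [Group H], (Fin n → H) → H)
    (hw : ∀ (H K : Type) [Group H] [Group K] (φ : H →* K) (x : Fin n → H),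
      φ (w H x) = w K (φ ∘ x))
    (ε : ℚ)
    (hgap : ∀ (Q : Type) [Group Q] [Finite Q],
      (∀ x : Fin n → Q, w Q x = 1) ∨
      (Nat.card {x : Fin n → Q // w Q x = 1} : ℚ) ≤ (1 - ε) * Nat.card (Fin n → Q))
    (G : Type) [Group G] [Finite G] (N : Subgroup G) (hN : N.Normal) :
    (∀ x : Fin n → G, w G x ∈ N) ∨
    (Nat.card {x : Fin n → G // w G x ∈ N} : ℚ) ≤ (1 - ε) * Nat.card (Fin n → G) := by
  let Φ := (QuotientGroup.mk' N).compLeft (Fin n)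
  have hΦ : Function.Surjective Φ := (QuotientGroup.mk'_surjective N).comp_left
  have mem_iff (x : Fin n → G) : w G x ∈ N ↔ w (G ⧸ N) (QuotientGroup.mk' N ∘ x) = 1 := by
    rw [← hw]
    exact (QuotientGroup.eq_one_iff _).symm
  refine (hgap (G ⧸ N)).imp (fun h x => (mem_iff x).2 (h _)) fun h => ?_
  rw [Nat.card_congr (Equiv.subtypeEquivRight mem_iff)]
  exact MonoidHom.card_subtype_comp_le_mul_card (p := fun y => w (G ⧸ N) y = 1) hΦ h

theorem stmt_4 {n : ℕ} (w : ∀ (H : Type) [Group H], (Fin n → H) → H)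
    (hw : ∀ (H K : Type) [Group H] [Group K] (φ : H →* K) (x : Fin n → H),
      φ (w H x) = w K (φ ∘ x))
    (ε : ℚ) (hε : 0 < ε)
    (hgap : ∀ (Q : Type) [Group Q] [Finite Q],
      (∀ x : Fin n → Q, w Q x = 1) ∨
      (Nat.card {x : Fin n → Q // w Q x = 1} : ℚ) ≤ (1 - ε) * Nat.card (Fin n → Q))
    (G : Type) [Group G] [Finite G] (N : Subgroup G) (hN : N.Normal) :
    (∀ x : Fin n → G, w G x ∈ N) ∨
    (Nat.card {x : Fin n → G // w G x ∈ N} : ℚ) ≤ (1 - ε) * Nat.card (Fin n → G) :=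
  stmt_4_general w hw ε hgap G N hN
end

section
/- Let G be a finite group and w a group word in n variables (inducing a map on every quotient of G) such that the equation w = 1 has satisfiability gap ε > 0 in all finite groups. If not every value of w on G^n lies in the center Z(G), then the proportion of tuples (x, x_1, ..., x_n) ∈ G^{n+1} satisfying x·w(x_1,...,x_n) = w(x_1,...,x_n)·x is at most 1 − ε/2. -/
/-!
Write `N = |G|` and `Z = Z(G)`. The number of pairs `(x, t)` with `x` commuting with `w(t)` is
`∑ₜ |C_G(w(t))|`, and a centralizer of a non-central element is a proper subgroup, hence of
order at most `N / 2`. So the count is at most `N / 2 · (Nⁿ + |S|)`, where `S` is the set of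
tuples with `w(t) ∈ Z`. The map `Gⁿ → (G/Z)ⁿ` is a surjective homomorphism, so the proportion
of `S` in `Gⁿ` equals the proportion of solutions of `w = 1` in `(G/Z)ⁿ`; as `w` is not
identically `1` on `G/Z`, the gap gives `|S| ≤ (1 - ε) Nⁿ`.
-/

open Subgroup

theorem Subgroup.two_mul_card_le_of_ne_top {G : Type*} [Group G] [Finite G] {H : Subgroup G}
    (hH : H ≠ ⊤) : 2 * Nat.card H ≤ Nat.card G := by
  rw [← H.card_mul_index, mul_comm]
  exact Nat.mul_le_mul_left _ (one_lt_index_of_ne_top hH)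

theorem two_mul_card_centralizer_le_of_notMem_center {G : Type*} [Group G] [Finite G] {g : G}
    (hg : g ∉ center G) : 2 * Nat.card (centralizer {g}) ≤ Nat.card G := by
  refine Subgroup.two_mul_card_le_of_ne_top fun h => hg ?_
  rw [mem_center_iff]
  intro x
  exact mem_centralizer_singleton_iff.mp (h ▸ mem_top x)

theorem MonoidHom.card_preimage_mul_card {G H : Type*} [Group G] [Group H] {f : G →* H}
    (hf : Function.Surjective f) (t : Set H) :
    Nat.card (f ⁻¹' t) * Nat.card H = Nat.card t * Nat.card G := by
  let e := QuotientGroup.quotientKerEquivOfSurjective f hf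
  have hpre : Nat.card (f ⁻¹' t) = Nat.card f.ker * Nat.card t := by
    have : f ⁻¹' t = QuotientGroup.mk ⁻¹' (e ⁻¹' t) := rfl
    rw [this, Nat.card_congr (QuotientGroup.preimageMkEquivSubgroupProdSet _ _), Nat.card_prod,
      Nat.card_preimage_of_injective e.injective (by simp [e.surjective.range_eq])]
  have hG : Nat.card G = Nat.card H * Nat.card f.ker := by
    rw [f.ker.card_eq_card_quotient_mul_card_subgroup, Nat.card_congr e.toEquiv]
  rw [hpre, hG]
  ring

section CommutingPairs

variable {G X : Type*} [Group G] (f : X → G)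

theorem card_commute_eq_sum_card_centralizer [Finite G] [Fintype X] :
    Nat.card {p : G × X // p.1 * f p.2 = f p.2 * p.1} = ∑ x, Nat.card (centralizer {f x}) := by
  rw [← Nat.card_sigma]
  exact Nat.card_congr
    { toFun := fun p => ⟨p.1.2, p.1.1, mem_centralizer_singleton_iff.mpr p.2⟩
      invFun := fun s => ⟨(s.2, s.1), mem_centralizer_singleton_iff.mp s.2.2⟩
      left_inv := fun _ => rfl
      right_inv := fun _ => rfl }

theorem two_mul_card_commute_le [Finite G] [Finite X] :
    2 * Nat.card {p : G × X // p.1 * f p.2 = f p.2 * p.1} ≤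
      Nat.card G * (Nat.card X + Nat.card {x // f x ∈ center G}) := by
  classical
  have := Fintype.ofFinite X
  have hpt : ∀ x, 2 * Nat.card (centralizer {f x}) ≤
      Nat.card G * (1 + if f x ∈ center G then 1 else 0) := by
    intro x
    split_ifs with hx
    · linarith [card_le_card_group (centralizer {f x})]
    · simpa using two_mul_card_centralizer_le_of_notMem_center hx
  calc 2 * Nat.card {p : G × X // p.1 * f p.2 = f p.2 * p.1}
      = ∑ x, 2 * Nat.card (centralizer {f x}) := by
        rw [card_commute_eq_sum_card_centralizer, Finset.mul_sum]
    _ ≤ ∑ x, Nat.card G * (1 + if f x ∈ center G then 1 else 0) :=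
        Finset.sum_le_sum fun x _ => hpt x
    _ = Nat.card G * (Nat.card X + Nat.card {x // f x ∈ center G}) := by
        rw [← Finset.mul_sum, Finset.sum_add_distrib]
        simp [Finset.sum_boole, Nat.card_eq_fintype_card, Fintype.card_subtype]

end CommutingPairs

section WordMaps

variable {n : ℕ} (w : ∀ (H : Type) [Group H], (Fin n → H) → H)
    (hw : ∀ (H K : Type) [Group H] [Group K] (φ : H →* K) (x : Fin n → H),
      φ (w H x) = w K (φ ∘ x))
    {G : Type} [Group G] (N : Subgroup G) [N.Normal]

include hw in
theorem card_word_mem_mul_card_eq :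
    Nat.card {x : Fin n → G // w G x ∈ N} * Nat.card (Fin n → G ⧸ N) =
      Nat.card {y : Fin n → G ⧸ N // w _ y = 1} * Nat.card (Fin n → G) := by
  let π := (QuotientGroup.mk' N).compLeft (Fin n)
  have hpre : π ⁻¹' {y | w _ y = 1} = {x | w G x ∈ N} := by
    ext x
    change w _ (QuotientGroup.mk' N ∘ x) = 1 ↔ _
    rw [← hw, QuotientGroup.mk'_apply, QuotientGroup.eq_one_iff, Set.mem_ofPred_eq]
  have := π.card_preimage_mul_card (QuotientGroup.mk'_surjective N).comp_left {y | w _ y = 1}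
  rwa [hpre] at this

include hw in
theorem not_forall_word_quotient_eq_one (hN : ¬ ∀ x : Fin n → G, w G x ∈ N) :
    ¬ ∀ y : Fin n → G ⧸ N, w _ y = 1 := by
  refine fun h => hN fun x => ?_
  rw [← QuotientGroup.eq_one_iff, ← h (QuotientGroup.mk ∘ x)]
  exact hw G _ (QuotientGroup.mk' N) x

end WordMaps

theorem stmt_5_general {n : ℕ} (w : ∀ (H : Type) [Group H], (Fin n → H) → H)
    (hw : ∀ (H K : Type) [Group H] [Group K] (φ : H →* K) (x : Fin n → H),
      φ (w H x) = w K (φ ∘ x))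
    (ε : ℚ)
    (hgap : ∀ (Q : Type) [Group Q] [Finite Q],
      (∀ x : Fin n → Q, w Q x = 1) ∨
      (Nat.card {x : Fin n → Q // w Q x = 1} : ℚ) ≤ (1 - ε) * Nat.card (Fin n → Q))
    (G : Type) [Group G] [Finite G]
    (hnc : ¬ ∀ x : Fin n → G, w G x ∈ Subgroup.center G) :
    (Nat.card {p : G × (Fin n → G) // p.1 * w G p.2 = w G p.2 * p.1} : ℚ) ≤
      (1 - ε / 2) * (Nat.card G * Nat.card (Fin n → G)) := by
  set S := Nat.card {x : Fin n → G // w G x ∈ center G}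
  have hT := (hgap (G ⧸ center G)).resolve_left (not_forall_word_quotient_eq_one w hw _ hnc)
  have hST : (S : ℚ) * Nat.card (Fin n → G ⧸ center G) =
      Nat.card {y : Fin n → G ⧸ center G // w _ y = 1} * Nat.card (Fin n → G) := by
    exact_mod_cast card_word_mem_mul_card_eq w hw (center G)
  have hS : (S : ℚ) ≤ (1 - ε) * Nat.card (Fin n → G) := by
    have hQ : (0 : ℚ) < Nat.card (Fin n → G ⧸ center G) := by exact_mod_cast Nat.card_pos
    refine le_of_mul_le_mul_right ?_ hQ
    rw [hST]
    nlinarith [(Nat.card (Fin n → G)).cast_nonneg (α := ℚ)]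
  have hpairs : (2 * Nat.card {p : G × (Fin n → G) // p.1 * w G p.2 = w G p.2 * p.1} : ℚ) ≤
      Nat.card G * (Nat.card (Fin n → G) + S) := by
    exact_mod_cast two_mul_card_commute_le (w G)
  nlinarith [(Nat.card G).cast_nonneg (α := ℚ)]

theorem stmt_5 {n : ℕ} (w : ∀ (H : Type) [Group H], (Fin n → H) → H)
    (hw : ∀ (H K : Type) [Group H] [Group K] (φ : H →* K) (x : Fin n → H),
      φ (w H x) = w K (φ ∘ x))
    (ε : ℚ) (hε : 0 < ε)
    (hgap : ∀ (Q : Type) [Group Q] [Finite Q],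
      (∀ x : Fin n → Q, w Q x = 1) ∨
      (Nat.card {x : Fin n → Q // w Q x = 1} : ℚ) ≤ (1 - ε) * Nat.card (Fin n → Q))
    (G : Type) [Group G] [Finite G]
    (hnc : ¬ ∀ x : Fin n → G, w G x ∈ Subgroup.center G) :
    (Nat.card {p : G × (Fin n → G) // p.1 * w G p.2 = w G p.2 * p.1} : ℚ) ≤
      (1 - ε / 2) * (Nat.card G * Nat.card (Fin n → G)) :=
  stmt_5_general w hw ε hgap G hnc
end

section
/- Assuming Laffey's theorem (in a finite group not all of whose elements have order dividing 3, the proportion of x with x^3 = 1 is at most 7/9), for every finite group G either x·y^3 = y^3·x holds for all x, y ∈ G, or the proportion of pairs (x,y) with x·y^3 = y^3·x is at most 23/27. -/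
/-!
Counting by the second coordinate, the number of pairs with `x * y ^ 3 = y ^ 3 * x` is
`∑ y, |C(y ^ 3)|`. Let `A` be the set of `y` with `y ^ 3` central; every other term is at most
`|G| / 2`. If some `C(y ^ 3)` has index two, it contains every square and the centre, hence all
of `A`, so `|A| ≤ |G| / 2` and the proportion is at most `3/4`. Otherwise every term outside `A`
is at most `|G| / 3`, while `|A| = |Z(G)| · #{q ∈ G/Z(G) | q ^ 3 = 1} ≤ 7|G|/9` by Laffey's
theorem applied to `G/Z(G)`; this gives `1/3 + (2/3)(7/9) = 23/27`.
-/

open Subgroup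

variable {G : Type} [Group G]

lemma card_commute_apply_eq_sum_card_centralizer [Fintype G] (f : G → G) :
    Nat.card {p : G × G // p.1 * f p.2 = f p.2 * p.1} =
      ∑ y : G, Nat.card (centralizer {f y} : Subgroup G) := by
  let e : {p : G × G // p.1 * f p.2 = f p.2 * p.1} ≃ Σ y : G, (centralizer {f y} : Subgroup G) :=
    { toFun := fun p => ⟨p.1.2, p.1.1, mem_centralizer_singleton_iff.2 p.2⟩
      invFun := fun q => ⟨(q.2, q.1), mem_centralizer_singleton_iff.1 q.2.2⟩
      left_inv := fun _ => rfl
      right_inv := fun _ => rfl }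
  rw [Nat.card_congr e, Nat.card_sigma]

lemma card_pow_mem_eq_card_mul_card_pow_eq_one (N : Subgroup G) [N.Normal] (m : ℕ) :
    Nat.card {z : G // z ^ m ∈ N} = Nat.card N * Nat.card {q : G ⧸ N // q ^ m = 1} := by
  have e : {z : G // z ^ m ∈ N} ≃ (QuotientGroup.mk ⁻¹' {q : G ⧸ N | q ^ m = 1} : Set G) :=
    Equiv.subtypeEquivRight fun z => by
      rw [Set.mem_preimage, Set.mem_ofPred_eq, ← QuotientGroup.mk_pow, QuotientGroup.eq_one_iff]
  rw [Nat.card_congr (e.trans (QuotientGroup.preimageMkEquivSubgroupProdSet N _)), Nat.card_prod]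
  rfl

lemma two_le_index_centralizer [Finite G] {g : G} (hg : g ∉ center G) :
    2 ≤ (centralizer {g} : Subgroup G).index :=
  one_lt_index_of_ne_top fun h => hg <| Set.singleton_subset_iff.1 <|
    centralizer_eq_top_iff_subset.1 h

lemma mem_of_pow_mem_of_index_eq_two {H : Subgroup G} (hH : H.index = 2) {m : ℕ} (hm : Odd m)
    {z : G} (hz : z ^ m ∈ H) : z ∈ H := by
  obtain ⟨k, rfl⟩ := hm
  have hsq : (z ^ k) ^ 2 ∈ H := sq_mem_of_index_two hH _
  have : z = ((z ^ k) ^ 2)⁻¹ * z ^ (2 * k + 1) := by group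
  rw [this]
  exact mul_mem (inv_mem hsq) hz

lemma two_mul_card_pow_mem_le [Finite G] {H N : Subgroup G} (hH : H.index = 2) (hN : N ≤ H)
    {m : ℕ} (hm : Odd m) : 2 * Nat.card {z : G // z ^ m ∈ N} ≤ Nat.card G := by
  have hle : Nat.card {z : G // z ^ m ∈ N} ≤ Nat.card H :=
    Nat.card_le_card_of_injective (fun z => ⟨z.1, mem_of_pow_mem_of_index_eq_two hH hm (hN z.2)⟩)
      fun _ _ h => Subtype.ext (congrArg (Subtype.val : H → G) h)
  have := H.card_mul_index
  rw [hH] at this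
  omega

/-- The bound `∑ y, |C(f y)| ≤ a |G| + (|G| - a) |G| / k`, with `a = #{y | f y ∈ Z(G)}`, cleared
of subtraction and division. -/
lemma mul_sum_card_centralizer_add_le [Fintype G] (f : G → G) (k : ℕ)
    (hk : ∀ y, f y ∉ center G → k ≤ (centralizer {f y} : Subgroup G).index) :
    k * ∑ y : G, Nat.card (centralizer {f y} : Subgroup G) +
        Nat.card {y : G // f y ∈ center G} * Nat.card G ≤
      k * Nat.card {y : G // f y ∈ center G} * Nat.card G + Nat.card G * Nat.card G := by
  classical
  have hterm : ∀ y : G, k * Nat.card (centralizer {f y} : Subgroup G) +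
      (if f y ∈ center G then 1 else 0) * Nat.card G ≤
        k * (if f y ∈ center G then 1 else 0) * Nat.card G + Nat.card G := by
    intro y
    split_ifs with hy
    · rw [(centralizer_eq_top_iff_subset.2 (Set.singleton_subset_iff.2 hy)), card_top]
      rw [mul_one, one_mul]
    · have hc := (centralizer {f y} : Subgroup G).card_mul_index
      have hle := Nat.mul_le_mul_left (Nat.card (centralizer {f y} : Subgroup G)) (hk y hy)
      linarith [mul_comm k (Nat.card (centralizer {f y} : Subgroup G))]
  have hsum := Finset.sum_le_sum fun y (_ : y ∈ Finset.univ) => hterm y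
  simp only [Finset.sum_add_distrib, ← Finset.mul_sum, ← Finset.sum_mul, Finset.sum_const,
    Finset.card_univ, smul_eq_mul, ← Nat.card_eq_fintype_card] at hsum
  rwa [Nat.card_eq_fintype_card (α := {y // _}), Fintype.card_subtype, Finset.card_filter]

theorem stmt_9_general
    (hLaffey : ∀ (Q : Type) [Group Q] [Finite Q],
      (¬ ∀ x : Q, x ^ 3 = 1) → 9 * Nat.card {x : Q // x ^ 3 = 1} ≤ 7 * Nat.card Q)
    (G : Type) [Group G] [Finite G] :
    (∀ x y : G, x * y ^ 3 = y ^ 3 * x) ∨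
    27 * Nat.card {p : G × G // p.1 * p.2 ^ 3 = p.2 ^ 3 * p.1} ≤ 23 * Nat.card (G × G) := by
  have := Fintype.ofFinite G
  refine or_iff_not_imp_left.2 fun hall => ?_
  rw [card_commute_apply_eq_sum_card_centralizer (· ^ 3 : G → G), Nat.card_prod]
  by_cases hex : ∃ y : G, (centralizer {y ^ 3} : Subgroup G).index = 2
  · obtain ⟨y₁, hy₁⟩ := hex
    have hA := two_mul_card_pow_mem_le hy₁ (center_le_centralizer _) (by decide : Odd 3)
    have hS := mul_sum_card_centralizer_add_le (· ^ 3 : G → G) 2 fun _ => two_le_index_centralizer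
    nlinarith
  · push Not at hex
    have hnot : ¬ ∀ q : G ⧸ center G, q ^ 3 = 1 := fun h => hall fun x y => by
      have := h y
      rw [← QuotientGroup.mk_pow, QuotientGroup.eq_one_iff] at this
      exact mem_center_iff.1 this x
    have hA : 9 * Nat.card {z : G // z ^ 3 ∈ center G} ≤ 7 * Nat.card G := by
      rw [card_pow_mem_eq_card_mul_card_pow_eq_one, ← (center G).card_mul_index, index]
      nlinarith [hLaffey _ hnot]
    have hS := mul_sum_card_centralizer_add_le (· ^ 3 : G → G) 3 fun y hy =>
      (two_le_index_centralizer hy).lt_of_ne' (hex y)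
    nlinarith

theorem stmt_9
    (hLaffey : ∀ (Q : Type) [Group Q] [Finite Q],
      (¬ ∀ x : Q, x ^ 3 = 1) → 9 * Nat.card {x : Q // x ^ 3 = 1} ≤ 7 * Nat.card Q)
    (hCent : ∀ (Q : Type) [Group Q] [Finite Q], IsPGroup 3 Q → ∀ y : Q,
      y ^ 3 ∉ Subgroup.center Q → 3 ≤ (Subgroup.centralizer {y ^ 3}).index)
    (G : Type) [Group G] [Finite G] :
    (∀ x y : G, x * y ^ 3 = y ^ 3 * x) ∨
    27 * Nat.card {p : G × G // p.1 * p.2 ^ 3 = p.2 ^ 3 * p.1} ≤ 23 * Nat.card (G × G) :=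
  stmt_9_general hLaffey G
end

section
/- There exists a group G of order 243 in which the proportion of pairs (x,y) ∈ G^2 satisfying x·y^3 = y^3·x is exactly 23/27. -/
/-!
Every cube in `G = N ⋊ ℤ/3`, `N = ℤ/9 × ℤ/9`, lies in the abelian normal subgroup `N`, and in a
semidirect product with abelian kernel an element commutes with `n ∈ N` exactly when its
`ℤ/3`-component fixes `n`. So the number of pairs is `|N| · ∑_y |Stab(y³)|`. The stabilizer is all
of `ℤ/3` for the 162 elements `y ∉ N` (their cubes are norms `n · f n · f² n`, where `f` is the
action of a generator of `ℤ/3`, hence fixed by `f`) and for the 27 elements of `N` whose cube is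
fixed, and trivial for the remaining 54; this gives `81 · (3 · 189 + 54) = 81 · 621 = 23 · 243² / 27`.
-/

theorem Nat.card_subtype_prod_eq_sum {α β : Type*} [Fintype α] [Fintype β] (p : α → β → Prop) :
    Nat.card {q : α × β // p q.1 q.2} = ∑ b, Nat.card {a // p a b} := by
  classical
  simp only [Nat.card_eq_fintype_card, Fintype.card_subtype, Finset.card_filter,
    Fintype.sum_prod_type_right]

namespace SemidirectProduct

variable {N H : Type*} [Group H]

instance [Group N] {φ : H →* MulAut N} [Fintype N] [Fintype H] : Fintype (N ⋊[φ] H) :=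
  Fintype.ofEquiv _ equivProd.symm

variable [CommGroup N] {φ : H →* MulAut N}

theorem commute_inl_iff (g : N ⋊[φ] H) (n : N) : Commute g (inl n) ↔ φ g.right n = n := by
  rw [Commute, SemiconjBy, SemidirectProduct.ext_iff]
  simp [mul_comm n g.left]

def commuteInlEquiv (n : N) : {g : N ⋊[φ] H // Commute g (inl n)} ≃ N × {h : H // φ h n = n} where
  toFun g := (g.1.left, ⟨g.1.right, (commute_inl_iff g.1 n).mp g.2⟩)
  invFun p := ⟨⟨p.1, p.2.1⟩, (commute_inl_iff ⟨p.1, p.2.1⟩ n).mpr p.2.2⟩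
  left_inv _ := rfl
  right_inv _ := rfl

theorem eq_inl_left_of_right_eq_one {g : N ⋊[φ] H} (hg : g.right = 1) : g = inl g.left := by
  ext <;> simp [hg]

theorem card_commute_pow [Fintype N] [Fintype H] {k : ℕ} (hk : ∀ h : H, h ^ k = 1) :
    Nat.card {p : (N ⋊[φ] H) × (N ⋊[φ] H) // Commute p.1 (p.2 ^ k)} =
      Nat.card N * ∑ y : N ⋊[φ] H, Nat.card {h : H // φ h (y ^ k).left = (y ^ k).left} := by
  rw [Nat.card_subtype_prod_eq_sum (fun x y ↦ Commute x (y ^ k)), Finset.mul_sum]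
  refine Finset.sum_congr rfl fun y _ ↦ ?_
  have hy : (y ^ k).right = 1 := by rw [← rightHom_eq_right, map_pow, hk]
  rw [← Nat.card_prod, ← Nat.card_congr (commuteInlEquiv _), ← eq_inl_left_of_right_eq_one hy]

end SemidirectProduct

def zmodPowersHom {M : Type*} [Monoid M] (n : ℕ) [NeZero n] {g : M} (hg : g ^ n = 1) :
    Multiplicative (ZMod n) →* M where
  toFun a := g ^ a.toAdd.val
  map_one' := by simp
  map_mul' a b := by
    simp only [toAdd_mul, ZMod.val_add, ← pow_eq_pow_mod _ hg, pow_add]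

namespace Order243

abbrev N := Multiplicative (ZMod 9 × ZMod 9)

/-- With `(a, b)` standing for `X^a Y^b`, this is `n ↦ F⁻¹ n F` (`X ↦ YX`, `Y ↦ X^6 Y`), so `G`
below is the presented group, with `inr (ofAdd 1)` playing the role of `F⁻¹`. -/
def conjByF : MulAut N := AddEquiv.toMultiplicative
  { toFun p := (p.1 + 6 * p.2, p.1 + p.2)
    invFun p := (7 * p.1 + 3 * p.2, 2 * p.1 + 7 * p.2)
    left_inv := by decide
    right_inv := by decide
    map_add' p q := by ext <;> simp only [Prod.fst_add, Prod.snd_add] <;> ring }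

theorem conjByF_pow_three : conjByF ^ 3 = 1 := by
  ext x : 1
  revert x
  decide

abbrev G := N ⋊[zmodPowersHom 3 conjByF_pow_three] Multiplicative (ZMod 3)

theorem card_G : Nat.card G = 243 := by
  rw [SemidirectProduct.card]; simp

set_option maxRecDepth 10000 in
theorem sum_card_stabilizer_cube :
    ∑ y : G, Nat.card {h // zmodPowersHom 3 conjByF_pow_three h (y ^ 3).left = (y ^ 3).left} =
      621 := by
  simp only [Nat.card_eq_fintype_card]
  decide

end Order243

theorem stmt_10 :
    ∃ (G : Type) (_ : Group G) (_ : Finite G), Nat.card G = 243 ∧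
      27 * Nat.card {p : G × G // p.1 * p.2 ^ 3 = p.2 ^ 3 * p.1} = 23 * Nat.card (G × G) := by
  refine ⟨Order243.G, inferInstance, inferInstance, Order243.card_G, ?_⟩
  change 27 * Nat.card {p : Order243.G × Order243.G // Commute p.1 (p.2 ^ 3)} = _
  rw [SemidirectProduct.card_commute_pow (by decide), Order243.sum_card_stabilizer_cube,
    Nat.card_prod, Order243.card_G]
  simp
end

section
/- Let G be a group, H a finite-index subgroup of G, and a, b ∈ G such that every x ∈ aH commutes with every y ∈ bH. Then G is virtually Abelian, i.e., G has a finite-index Abelian subgroup. -/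
/-!
Specialising one of the two elements of `H` to `1` shows that `a` and `b` commute with each other
and with every element of `H`; cancelling them from `(a h₁)(b h₂) = (b h₂)(a h₁)` shows that `H`
itself is abelian.
-/

section

variable {G : Type*} [Group G] {a b c : G}

theorem Commute.of_mul_right (hab : Commute a b) (habc : Commute a (b * c)) : Commute a c := by
  simpa using hab.inv_right.mul_right habc

theorem Commute.of_mul_left (hac : Commute a c) (habc : Commute (a * b) c) : Commute b c :=
  (hac.symm.of_mul_right habc.symm).symm

theorem Commute.of_mul_mul {x y : G} (hab : Commute a b) (hay : Commute a y) (hxb : Commute x b)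
    (h : Commute (a * x) (b * y)) : Commute x y :=
  hxb.of_mul_right ((hab.mul_right hay).of_mul_left h)

theorem Subgroup.commute_of_commute_mul_mul {H : Subgroup G}
    (h : ∀ x ∈ H, ∀ y ∈ H, Commute (a * x) (b * y)) : ∀ x ∈ H, ∀ y ∈ H, Commute x y := by
  have hab : Commute a b := by simpa using h 1 H.one_mem 1 H.one_mem
  intro x hx y hy
  refine hab.of_mul_mul ?_ ?_ (h x hx y hy)
  · exact hab.of_mul_right (by simpa using h 1 H.one_mem y hy)
  · exact hab.of_mul_left (by simpa using h x hx 1 H.one_mem)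

end

theorem stmt_18 {G : Type*} [Group G] (H : Subgroup G) (hH : H.FiniteIndex) (a b : G)
    (h : ∀ h₁ ∈ H, ∀ h₂ ∈ H, (a * h₁) * (b * h₂) = (b * h₂) * (a * h₁)) :
    ∃ K : Subgroup G, K.FiniteIndex ∧ ∀ x ∈ K, ∀ y ∈ K, x * y = y * x :=
  ⟨H, hH, H.commute_of_commute_mul_mul h⟩
end

section
/- There exists a group G with a subgroup H of index 2 and a coset gH such that x·y^2 = y^2·x holds for all x, y ∈ gH, yet the equation x·y^2 = y^2·x is not a law in any finite-index subgroup of G. (Concretely: in the group G generated by Z, Y, X, F with relations F^2 = 1, X central, ZF = FZ^{-1}, YF = FY^{-1}, YZ = ZYX, every element w of the coset F·⟨Z,Y,X⟩ satisfies w^2 ∈ Z(G), while no finite-index subgroup of G satisfies xy^2 = y^2x identically.) -/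
/-!
Normal forms `Z^k Y^ℓ X^m F^n` exhibit `G` as the discrete Heisenberg group `⟨Z, Y⟩`, with central
`X`, extended by an involution `F` inverting `Z` and `Y` and hence fixing `X`. If `w = hF` with
`h = Z^k Y^ℓ X^m`, then `w² = h · FhF` and `FhF` has the `Z`- and `Y`-exponents of `h` negated,
so `w²` is a power of `X`, hence central. On the other hand every subgroup of finite index contains
some `Z^a` and `Y^b` with `a, b > 0`, and `Z^a` does not commute with `(Y^b)² = Y^{2b}`: their
commutator is `X^{±2ab}`.
-/

/-- `⟨k, l, m, ε⟩` is the normal form `Z^k Y^l X^m F^n`, with `ε = (-1)^n`. -/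
@[ext]
structure HeisenbergDihedral : Type where
  k : ℤ
  l : ℤ
  m : ℤ
  ε : ℤˣ

namespace HeisenbergDihedral

instance : One HeisenbergDihedral := ⟨⟨0, 0, 0, 1⟩⟩

/-- Move `F^n` right past `Z^k' Y^l'` (inverting them if `n = 1`), then `Y^l` past `Z^±k'`
using `Y Z = Z Y X`. -/
instance : Mul HeisenbergDihedral :=
  ⟨fun a b => ⟨a.k + a.ε * b.k, a.l + a.ε * b.l, a.m + b.m + a.l * a.ε * b.k, a.ε * b.ε⟩⟩

instance : Inv HeisenbergDihedral :=
  ⟨fun a => ⟨-(a.ε * a.k), -(a.ε * a.l), a.l * a.k - a.m, a.ε⟩⟩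

@[simp] lemma one_k : (1 : HeisenbergDihedral).k = 0 := rfl
@[simp] lemma one_l : (1 : HeisenbergDihedral).l = 0 := rfl
@[simp] lemma one_m : (1 : HeisenbergDihedral).m = 0 := rfl
@[simp] lemma one_ε : (1 : HeisenbergDihedral).ε = 1 := rfl

variable (a b : HeisenbergDihedral)

@[simp] lemma mul_k : (a * b).k = a.k + a.ε * b.k := rfl
@[simp] lemma mul_l : (a * b).l = a.l + a.ε * b.l := rfl
@[simp] lemma mul_m : (a * b).m = a.m + b.m + a.l * a.ε * b.k := rfl
@[simp] lemma mul_ε : (a * b).ε = a.ε * b.ε := rfl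

@[simp] lemma inv_k : a⁻¹.k = -(a.ε * a.k) := rfl
@[simp] lemma inv_l : a⁻¹.l = -(a.ε * a.l) := rfl
@[simp] lemma inv_m : a⁻¹.m = a.l * a.k - a.m := rfl
@[simp] lemma inv_ε : a⁻¹.ε = a.ε := rfl

lemma val_ε_mul_self : (a.ε : ℤ) * a.ε = 1 := by
  rw [← Units.val_mul, Int.units_mul_self, Units.val_one]

instance : Group HeisenbergDihedral where
  mul_assoc a b c := by
    ext <;> simp only [mul_k, mul_l, mul_m, mul_ε, Units.val_mul]
    · ring
    · ring
    · linear_combination b.l * b.ε * c.k * val_ε_mul_self a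
    · rw [mul_assoc]
  one_mul a := by ext <;> simp
  mul_one a := by ext <;> simp
  inv_mul_cancel a := by
    ext <;> simp only [mul_k, mul_l, mul_m, mul_ε, inv_k, inv_l, inv_m, inv_ε, one_k, one_l,
      one_m, one_ε, Int.units_mul_self]
    · ring
    · ring
    · linear_combination -(a.l * a.k) * val_ε_mul_self a

def Z : HeisenbergDihedral := ⟨1, 0, 0, 1⟩
def Y : HeisenbergDihedral := ⟨0, 1, 0, 1⟩
def F : HeisenbergDihedral := ⟨0, 0, 0, -1⟩

lemma Z_pow (n : ℕ) : Z ^ n = ⟨n, 0, 0, 1⟩ := by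
  induction n with
  | zero => rfl
  | succ n ih => rw [pow_succ, ih]; ext <;> simp [Z]

lemma Y_pow (n : ℕ) : Y ^ n = ⟨0, n, 0, 1⟩ := by
  induction n with
  | zero => rfl
  | succ n ih => rw [pow_succ, ih]; ext <;> simp [Y]

lemma Z_pow_mul_Y_pow_ne {p q : ℕ} (hp : 0 < p) (hq : 0 < q) :
    Z ^ p * Y ^ q ≠ Y ^ q * Z ^ p := by
  intro h
  have hm := congrArg m h
  simp only [Z_pow, Y_pow, mul_m, Units.val_one] at hm
  have : (0 : ℤ) < q * p := by positivity
  linarith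

lemma mk_mem_center (m : ℤ) : (⟨0, 0, m, 1⟩ : HeisenbergDihedral) ∈ Subgroup.center _ :=
  Subgroup.mem_center_iff.mpr fun a => by ext <;> simp [add_comm]

lemma sq_eq_of_ε_eq_neg_one (hε : a.ε = -1) : a ^ 2 = ⟨0, 0, 2 * a.m - a.l * a.k, 1⟩ := by
  ext <;> simp [pow_two, hε]
  ring

lemma sq_mem_center_of_ε_eq_neg_one (hε : a.ε = -1) : a ^ 2 ∈ Subgroup.center _ := by
  rw [sq_eq_of_ε_eq_neg_one a hε]
  exact mk_mem_center _

def sign : HeisenbergDihedral →* ℤˣ where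
  toFun := ε
  map_one' := rfl
  map_mul' _ _ := rfl

lemma index_ker_sign : sign.ker.index = 2 := by
  have hsurj : Function.Surjective sign := fun u => ⟨⟨0, 0, 0, u⟩, rfl⟩
  rw [Subgroup.index_ker, MonoidHom.range_eq_top.mpr hsurj, Subgroup.card_top,
    Nat.card_eq_fintype_card, Fintype.card_units_int]

lemma F_mul_ε_of_mem_ker {a : HeisenbergDihedral} (ha : a ∈ sign.ker) : (F * a).ε = -1 := by
  rw [mul_ε, show a.ε = 1 from ha]
  rfl

lemma exists_not_commute_sq (K : Subgroup HeisenbergDihedral) [K.FiniteIndex] :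
    ∃ x ∈ K, ∃ y ∈ K, x * y ^ 2 ≠ y ^ 2 * x := by
  obtain ⟨p, hp, -, hZ⟩ := K.exists_pow_mem_of_index_ne_zero Subgroup.FiniteIndex.index_ne_zero Z
  obtain ⟨q, hq, -, hY⟩ := K.exists_pow_mem_of_index_ne_zero Subgroup.FiniteIndex.index_ne_zero Y
  refine ⟨Z ^ p, hZ, Y ^ q, hY, ?_⟩
  rw [← pow_mul]
  exact Z_pow_mul_Y_pow_ne hp (by positivity)

end HeisenbergDihedral

open HeisenbergDihedral in
theorem stmt_19 :
    ∃ (G : Type) (_ : Group G) (H : Subgroup G) (g : G),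
      H.index = 2 ∧
      (∀ h₁ ∈ H, ∀ h₂ ∈ H, (g * h₁) * (g * h₂) ^ 2 = (g * h₂) ^ 2 * (g * h₁)) ∧
      (∀ K : Subgroup G, K.FiniteIndex → ¬ ∀ x ∈ K, ∀ y ∈ K, x * y ^ 2 = y ^ 2 * x) := by
  refine ⟨HeisenbergDihedral, inferInstance, sign.ker, F, index_ker_sign, ?_, fun K _ => ?_⟩
  · intro h₁ _ h₂ hh₂
    exact Subgroup.mem_center_iff.mp (sq_mem_center_of_ε_eq_neg_one _ (F_mul_ε_of_mem_ker hh₂)) _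
  · obtain ⟨x, hx, y, hy, hne⟩ := exists_not_commute_sq K
    exact fun hlaw => hne (hlaw x hx y hy)
end
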